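/- Let S and T be sequences of steps such that S·n·e·T is a Schröder path of length n and the endpoint of S lies strictly above the main diagonal. Then S·d·T and S·e·n·T are also Schröder paths of length n, and LLT(S·n·e·T) = (q−1)·LLT(S·d·T) + LLT(S·e·n·T). -/

import Mathlib

/-- An LLT graph: a directed graph with three kinds of edges. -/
structure LLTGraph (V : Type) where
  E1 : Finset (V × V)
  E2 : Finset (V × V)
  Ed : Finset (V × V)

/-- The variable `q`, viewed inside `ℤ[q][x₁,…,x_N]`. -/
noncomputable def lltQ (N : ℕ) : MvPolynomial (Fin N) (Polynomial ℤ) :=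
  MvPolynomial.C Polynomial.X

/-- The LLT generating function of an LLT graph, read as a polynomial identity
in `ℤ[q][x₁,…,x_N]`, colorings taking values in `{1,…,N}` (as `Fin N`). -/
noncomputable def LLT {V : Type} [Fintype V] [DecidableEq V] (G : LLTGraph V) (N : ℕ) :
    MvPolynomial (Fin N) (Polynomial ℤ) :=
  ∑ f : V → Fin N,
    ((∏ e ∈ G.E1, if f e.2 < f e.1 then 1 else 0) *
      (∏ e ∈ G.E2, if f e.2 ≤ f e.1 then 1 else 0) *
      (∏ e ∈ G.Ed,
        ((if f e.2 < f e.1 then lltQ N else 0) + (if f e.1 ≤ f e.2 then 1 else 0)))) *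
    ∏ v : V, MvPolynomial.X (f v)

/-- `K_n^⇒` : the complete LLT graph on `{1,…,n}` whose only edges are
double edges `i ⇒ j` for `i < j`. -/
def KnGraph (n : ℕ) : LLTGraph (Fin n) where
  E1 := ∅
  E2 := ∅
  Ed := Finset.univ.filter fun p => p.1 < p.2
/-- Steps of a Schröder path: north `(0,1)`, east `(1,0)`, diagonal `(1,1)`. -/
inductive SStep : Type
  | north : SStep
  | east  : SStep
  | diag  : SStep
deriving DecidableEq

/-- The displacement vector of a step. -/
def SStep.vec : SStep → ℕ × ℕ
  | .north => (0, 1)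
  | .east  => (1, 0)
  | .diag  => (1, 1)

/-- Endpoint of a path started at the origin `(0,0)`. -/
def endPt (P : List SStep) : ℕ × ℕ :=
  P.foldl (fun p s => (p.1 + s.vec.1, p.2 + s.vec.2)) (0, 0)

/-- The lattice point reached after the first `k` steps. -/
def posAt (P : List SStep) (k : ℕ) : ℕ × ℕ := endPt (P.take k)

/-- A Schröder path of length `n`: from `(0,0)` to `(n,n)`, never strictly below
the main diagonal, with no diagonal step starting on the main diagonal. -/
def IsSchroder (n : ℕ) (P : List SStep) : Prop :=
  endPt P = (n, n) ∧
  (∀ k, (posAt P k).1 ≤ (posAt P k).2) ∧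
  (∀ k, P[k]? = some SStep.diag → (posAt P k).1 < (posAt P k).2)

/-- The box `(i,j)` (unit square with corners `(i-1,j-1)` and `(i,j)`, `i,j ≥ 1`)
contains a diagonal step of `P`. -/
def hasDiagStep (P : List SStep) (i j : ℕ) : Prop :=
  ∃ k, P[k]? = some SStep.diag ∧ posAt P k = (i - 1, j - 1)

/-- The box `(i,j)` lies (weakly) below the path `P`. -/
def boxBelow (P : List SStep) (i j : ℕ) : Prop :=
  ∃ k, (posAt P k).1 ≤ i - 1 ∧ j ≤ (posAt P k).2

open Classical in
/-- The LLT graph `G_P` of a Schröder path `P` of length `n`; vertex `v : Fin n`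
represents the label `v+1`. -/
noncomputable def pathGraph (n : ℕ) (P : List SStep) : LLTGraph (Fin n) where
  E1 := Finset.univ.filter fun p => hasDiagStep P ((p.1 : ℕ) + 1) ((p.2 : ℕ) + 1)
  E2 := ∅
  Ed := Finset.univ.filter fun p =>
    (p.1 : ℕ) < (p.2 : ℕ) ∧ boxBelow P ((p.1 : ℕ) + 1) ((p.2 : ℕ) + 1) ∧
      ¬ hasDiagStep P ((p.1 : ℕ) + 1) ((p.2 : ℕ) + 1)

/-- The height `h(i)` of column `i` of `P`: the `y` such that `(i-1,y)` lies on `P`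
and is followed by an east or diagonal step. -/
noncomputable def colHeight (P : List SStep) (i : ℕ) : ℕ :=
  sSup {y | ∃ k, posAt P k = (i - 1, y) ∧
    (P[k]? = some SStep.east ∨ P[k]? = some SStep.diag)}

/-- The jump `j(i) = h(i+1) - h(i)` of column `i`. -/
noncomputable def jump (P : List SStep) (i : ℕ) : ℕ :=
  colHeight P (i + 1) - colHeight P i

open Classical in
/-- The set of columns `1 ≤ i ≤ n` of `P` containing a diagonal step. -/
noncomputable def diagCols (n : ℕ) (P : List SStep) : Finset ℕ :=
  (Finset.Icc 1 n).filter fun i =>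
    ∃ k, P[k]? = some SStep.diag ∧ (posAt P k).1 = i - 1

/-- `P` is connected: the only points of `P` on the main diagonal are `(0,0)` and `(n,n)`. -/
def ConnectedPath (n : ℕ) (P : List SStep) : Prop :=
  ∀ k, (posAt P k).1 = (posAt P k).2 → posAt P k = (0, 0) ∨ posAt P k = (n, n)

/-- The first two steps of `P` are north and diagonal. -/
def FirstStepsND (P : List SStep) : Prop :=
  P[0]? = some SStep.north ∧ P[1]? = some SStep.diag

/-- `P` has no outer corner: no point of `P` is followed by an east step and then
a north step. -/
def NoOuterCorner (P : List SStep) : Prop :=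
  ¬ ∃ k, P[k]? = some SStep.east ∧ P[k + 1]? = some SStep.north

/-- `P` has no outer corner lying strictly above the main diagonal. -/
def NoOuterCornerAboveDiag (P : List SStep) : Prop :=
  ¬ ∃ k, (posAt P k).1 < (posAt P k).2 ∧
    P[k]? = some SStep.east ∧ P[k + 1]? = some SStep.north

/-- Every connected component of `P` of length `≥ 2` begins with the steps north,
diagonal: from every point on the diagonal the path continues with a north step,
followed either by a diagonal step, or by an east step (a length-one component). -/
def ComponentsStartND (P : List SStep) : Prop :=
  ∀ k < P.length, (posAt P k).1 = (posAt P k).2 →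
    P[k]? = some SStep.north ∧
      (P[k + 1]? = some SStep.diag ∨ P[k + 1]? = some SStep.east)

/-! The paths `S·n·e·T`, `S·d·T` and `S·e·n·T` visit the same lattice points and take the same
diagonal steps, except at the corner `a = endPt S`. Hence the graph of `S·e·n·T` is a common
graph `H`, the graph of `S·d·T` is `H` with a type I edge at the box of `a`, and the graph of
`S·n·e·T` is `H` with a double edge there. The identity then holds coloring by coloring, because
the weight `q·[f u > f v] + [f u ≤ f v]` of a double edge is `(q - 1)·[f u > f v] + 1`. -/

attribute [ext] LLTGraph

namespace LLTGraph
variable {V : Type} [DecidableEq V]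

def insertE1 (G : LLTGraph V) (e : V × V) : LLTGraph V := { G with E1 := insert e G.E1 }

def insertEd (G : LLTGraph V) (e : V × V) : LLTGraph V := { G with Ed := insert e G.Ed }

end LLTGraph

theorem LLT_insertEd {V : Type} [Fintype V] [DecidableEq V] (G : LLTGraph V) {e : V × V}
    (h1 : e ∉ G.E1) (hd : e ∉ G.Ed) (N : ℕ) :
    LLT (G.insertEd e) N = (lltQ N - 1) * LLT (G.insertE1 e) N + LLT G N := by
  simp only [LLT, LLTGraph.insertE1, LLTGraph.insertEd, Finset.prod_insert h1,
    Finset.prod_insert hd, Finset.mul_sum, ← Finset.sum_add_distrib]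
  refine Finset.sum_congr rfl fun f _ => ?_
  by_cases h : f e.2 < f e.1
  · simp only [h, not_le.2 h, if_true, if_false]
    ring
  · simp only [h, not_lt.1 h, if_true, if_false]
    ring

namespace SchroderPath

open Set

theorem foldl_step_eq (P : List SStep) (c : ℕ × ℕ) :
    P.foldl (fun p s => (p.1 + s.vec.1, p.2 + s.vec.2)) c = c + (P.map SStep.vec).sum := by
  induction P generalizing c with
  | nil => simp
  | cons s P ih =>
    rw [List.foldl_cons, ih, List.map_cons, List.sum_cons, ← add_assoc]
    rfl

theorem endPt_eq_sum (P : List SStep) : endPt P = (P.map SStep.vec).sum := by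
  simp [endPt, foldl_step_eq]

theorem endPt_append (A B : List SStep) : endPt (A ++ B) = endPt A + endPt B := by
  simp [endPt_eq_sum]

theorem endPt_singleton (s : SStep) : endPt [s] = s.vec := by
  simp [endPt_eq_sum]

theorem posAt_succ {P : List SStep} {k : ℕ} {s : SStep} (h : P[k]? = some s) :
    posAt P (k + 1) = posAt P k + s.vec := by
  rw [posAt, List.take_add_one, h, Option.toList_some, endPt_append, endPt_singleton, posAt]

theorem posAt_of_length_le {P : List SStep} {k : ℕ} (h : P.length ≤ k) :
    posAt P k = endPt P := by
  rw [posAt, List.take_of_length_le h]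

theorem posAt_le_endPt (P : List SStep) (k : ℕ) : posAt P k ≤ endPt P := by
  conv_rhs => rw [← List.take_append_drop k P, endPt_append]
  exact le_self_add

theorem posAt_append_of_le {A : List SStep} (B : List SStep) {k : ℕ} (h : k ≤ A.length) :
    posAt (A ++ B) k = posAt A k := by
  rw [posAt, List.take_append_of_le_length h, posAt]

theorem posAt_append_add (A B : List SStep) (j : ℕ) :
    posAt (A ++ B) (A.length + j) = endPt A + posAt B j := by
  rw [posAt, List.take_append, List.take_of_length_le (by omega), Nat.add_sub_cancel_left,
    endPt_append, posAt]

theorem posAt_append_eq_or (A B : List SStep) (k : ℕ) :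
    posAt (A ++ B) k = posAt A k ∨ ∃ j, posAt (A ++ B) k = endPt A + posAt B j := by
  rcases le_or_gt k A.length with h | h
  · exact .inl (posAt_append_of_le B h)
  · obtain ⟨j, rfl⟩ := Nat.exists_eq_add_of_le h.le
    exact .inr ⟨j, posAt_append_add A B j⟩

def points (P : List SStep) : Set (ℕ × ℕ) := range (posAt P)

def diagStarts (P : List SStep) : Set (ℕ × ℕ) :=
  {p | ∃ k, P[k]? = some SStep.diag ∧ posAt P k = p}

theorem endPt_mem_points (P : List SStep) : endPt P ∈ points P :=
  ⟨P.length, posAt_of_length_le le_rfl⟩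

theorem zero_mem_points (P : List SStep) : 0 ∈ points P := ⟨0, rfl⟩

theorem le_endPt_of_mem_points {P : List SStep} {p : ℕ × ℕ} (hp : p ∈ points P) :
    p ≤ endPt P := by
  obtain ⟨k, rfl⟩ := hp
  exact posAt_le_endPt P k

theorem fst_lt_of_mem_diagStarts {P : List SStep} {p : ℕ × ℕ} (hp : p ∈ diagStarts P) :
    p.1 < (endPt P).1 := by
  obtain ⟨k, hk, rfl⟩ := hp
  have h := (Prod.le_def.1 (posAt_le_endPt P (k + 1))).1
  rw [posAt_succ hk, Prod.fst_add] at h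
  simp only [SStep.vec] at h
  omega

theorem points_append (A B : List SStep) :
    points (A ++ B) = points A ∪ (endPt A + ·) '' points B := by
  ext p
  constructor
  · rintro ⟨k, rfl⟩
    rcases posAt_append_eq_or A B k with h | ⟨j, h⟩
    · exact .inl ⟨k, h.symm⟩
    · exact .inr ⟨posAt B j, ⟨j, rfl⟩, h.symm⟩
  · rintro (⟨k, rfl⟩ | ⟨_, ⟨j, rfl⟩, rfl⟩)
    · rcases le_or_gt k A.length with h | h
      · exact ⟨k, posAt_append_of_le B h⟩
      · refine ⟨A.length, ?_⟩
        rw [posAt_append_of_le B le_rfl, posAt_of_length_le le_rfl, posAt_of_length_le h.le]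
    · exact ⟨A.length + j, posAt_append_add A B j⟩

theorem diagStarts_append (A B : List SStep) :
    diagStarts (A ++ B) = diagStarts A ∪ (endPt A + ·) '' diagStarts B := by
  ext p
  constructor
  · rintro ⟨k, hk, rfl⟩
    rcases lt_or_ge k A.length with h | h
    · rw [List.getElem?_append_left h] at hk
      exact .inl ⟨k, hk, (posAt_append_of_le B h.le).symm⟩
    · obtain ⟨j, rfl⟩ := Nat.exists_eq_add_of_le h
      rw [List.getElem?_append_right h, Nat.add_sub_cancel_left] at hk
      exact .inr ⟨posAt B j, ⟨j, hk, rfl⟩, (posAt_append_add A B j).symm⟩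
  · rintro (⟨k, hk, rfl⟩ | ⟨_, ⟨j, hj, rfl⟩, rfl⟩)
    · have h : k < A.length := by
        by_contra h'
        rw [List.getElem?_eq_none (by omega)] at hk
        cases hk
      exact ⟨k, by rw [List.getElem?_append_left h, hk], posAt_append_of_le B h.le⟩
    · refine ⟨A.length + j, ?_, posAt_append_add A B j⟩
      rw [List.getElem?_append_right (by omega), Nat.add_sub_cancel_left, hj]

theorem points_singleton (s : SStep) : points [s] = {0, s.vec} := by
  ext p
  constructor
  · rintro ⟨_ | k, rfl⟩
    · exact .inl rfl
    · exact .inr (by rw [posAt_of_length_le (by simp), endPt_singleton]; rfl)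
  · rintro (rfl | rfl)
    · exact zero_mem_points _
    · exact endPt_singleton s ▸ endPt_mem_points [s]

theorem diagStarts_eq_empty {P : List SStep} (h : SStep.diag ∉ P) : diagStarts P = ∅ :=
  eq_empty_of_forall_notMem fun _ ⟨_, hk, _⟩ => h (List.mem_of_getElem? hk)

theorem diagStarts_diag : diagStarts [SStep.diag] = {0} := by
  ext p
  constructor
  · rintro ⟨_ | k, hk, rfl⟩
    · rfl
    · simp at hk
  · rintro rfl
    exact ⟨0, rfl, rfl⟩

theorem isSchroder_iff {n : ℕ} {P : List SStep} :
    IsSchroder n P ↔ endPt P = (n, n) ∧ (∀ p ∈ points P, p.1 ≤ p.2) ∧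
      ∀ p ∈ diagStarts P, p.1 < p.2 := by
  unfold IsSchroder points diagStarts
  simp only [forall_mem_range, mem_ofPred_eq, forall_exists_index, and_imp]
  constructor
  · rintro ⟨h1, h2, h3⟩
    exact ⟨h1, h2, fun _ k hk hp => hp ▸ h3 k hk⟩
  · rintro ⟨h1, h2, h3⟩
    exact ⟨h1, h2, fun k hk => h3 _ k hk rfl⟩

def CellBelow (P : List SStep) (p : ℕ × ℕ) : Prop := ∃ r ∈ points P, r.1 ≤ p.1 ∧ p.2 < r.2

theorem boxBelow_add_one_iff {P : List SStep} {u v : ℕ} :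
    boxBelow P (u + 1) (v + 1) ↔ CellBelow P (u, v) := by
  simp only [boxBelow, CellBelow, points, exists_range_iff, Nat.add_sub_cancel,
    Nat.lt_iff_add_one_le]

theorem mem_pathGraph_E1 {n : ℕ} {P : List SStep} {e : Fin n × Fin n} :
    e ∈ (pathGraph n P).E1 ↔ Prod.map Fin.val Fin.val e ∈ diagStarts P := by
  simp only [pathGraph, Finset.mem_filter, Finset.mem_univ, true_and]
  rfl

theorem mem_pathGraph_Ed {n : ℕ} {P : List SStep} {e : Fin n × Fin n} :
    e ∈ (pathGraph n P).Ed ↔ (e.1 : ℕ) < e.2 ∧ CellBelow P (Prod.map Fin.val Fin.val e) ∧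
      Prod.map Fin.val Fin.val e ∉ diagStarts P := by
  simp only [pathGraph, Finset.mem_filter, Finset.mem_univ, true_and, boxBelow_add_one_iff]
  rfl

theorem points_pair (s t : SStep) : points [s, t] = {0, s.vec, s.vec + t.vec} := by
  rw [show [s, t] = [s] ++ [t] from rfl, points_append, points_singleton, points_singleton,
    endPt_singleton, image_pair, add_zero]
  ext p
  simp only [mem_insert_iff, mem_union, mem_singleton_iff]
  tauto

theorem endPt_pair (s t : SStep) : endPt [s, t] = s.vec + t.vec := by
  rw [show [s, t] = [s] ++ [t] from rfl, endPt_append, endPt_singleton, endPt_singleton]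

section Splice
variable {S T : List SStep} {n : ℕ}

theorem points_splice (M : List SStep) : points (S ++ M ++ T) =
    points S ∪ (endPt S + ·) '' points M ∪ (endPt S + endPt M + ·) '' points T := by
  rw [points_append, points_append, endPt_append]

theorem diagStarts_splice (M : List SStep) : diagStarts (S ++ M ++ T) =
    diagStarts S ∪ (endPt S + ·) '' diagStarts M ∪ (endPt S + endPt M + ·) '' diagStarts T := by
  rw [diagStarts_append, diagStarts_append, endPt_append]

theorem points_splice_north_east : points (S ++ [SStep.north, SStep.east] ++ T) =
    insert (endPt S + (0, 1)) (points (S ++ [SStep.diag] ++ T)) := by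
  have hS := endPt_mem_points S
  have hT := zero_mem_points T
  rw [points_splice, points_splice, points_pair, points_singleton, endPt_pair, endPt_singleton]
  ext p
  simp only [SStep.vec, mem_union, mem_insert_iff, mem_singleton_iff, mem_image]
  aesop

theorem points_splice_east_north : points (S ++ [SStep.east, SStep.north] ++ T) =
    insert (endPt S + (1, 0)) (points (S ++ [SStep.diag] ++ T)) := by
  have hS := endPt_mem_points S
  have hT := zero_mem_points T
  rw [points_splice, points_splice, points_pair, points_singleton, endPt_pair, endPt_singleton]
  ext p
  simp only [SStep.vec, mem_union, mem_insert_iff, mem_singleton_iff, mem_image]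
  aesop

theorem diagStarts_splice_north_east : diagStarts (S ++ [SStep.north, SStep.east] ++ T) =
    diagStarts (S ++ [SStep.east, SStep.north] ++ T) := by
  rw [diagStarts_splice, diagStarts_splice, diagStarts_eq_empty (P := [_, _]) (by simp),
    diagStarts_eq_empty (P := [_, _]) (by simp), endPt_pair, endPt_pair, add_comm SStep.north.vec]

theorem diagStarts_splice_diag : diagStarts (S ++ [SStep.diag] ++ T) =
    insert (endPt S) (diagStarts (S ++ [SStep.east, SStep.north] ++ T)) := by
  rw [diagStarts_splice, diagStarts_splice, diagStarts_diag,
    diagStarts_eq_empty (P := [_, _]) (by simp), endPt_pair, endPt_singleton, image_singleton,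
    image_empty, add_zero, union_empty, union_singleton, insert_union]
  rfl

theorem endPt_notMem_diagStarts_splice_east_north :
    endPt S ∉ diagStarts (S ++ [SStep.east, SStep.north] ++ T) := by
  rw [diagStarts_splice, diagStarts_eq_empty (P := [_, _]) (by simp), image_empty, union_empty]
  rintro (h | ⟨p, -, hp⟩)
  · exact (fst_lt_of_mem_diagStarts h).false
  · have := congrArg Prod.fst hp
    simp [SStep.vec, endPt_pair] at this
    omega

theorem endPt_splice_diag :
    endPt (S ++ [SStep.diag] ++ T) = endPt (S ++ [SStep.north, SStep.east] ++ T) := by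
  rw [endPt_append, endPt_append, endPt_append, endPt_append, endPt_singleton, endPt_pair]
  rfl

theorem endPt_splice_east_north :
    endPt (S ++ [SStep.east, SStep.north] ++ T) = endPt (S ++ [SStep.north, SStep.east] ++ T) := by
  rw [endPt_append, endPt_append, endPt_append, endPt_append, endPt_pair, endPt_pair]
  rfl


theorem IsSchroder.splice_diag (hP : IsSchroder n (S ++ [SStep.north, SStep.east] ++ T))
    (hS : (endPt S).1 < (endPt S).2) : IsSchroder n (S ++ [SStep.diag] ++ T) := by
  obtain ⟨hend, hpts, hdiag⟩ := isSchroder_iff.1 hP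
  rw [points_splice_north_east, forall_mem_insert] at hpts
  rw [diagStarts_splice_north_east] at hdiag
  rw [isSchroder_iff, endPt_splice_diag, diagStarts_splice_diag, forall_mem_insert]
  exact ⟨hend, hpts.2, hS, hdiag⟩

theorem IsSchroder.splice_east_north
    (hP : IsSchroder n (S ++ [SStep.north, SStep.east] ++ T))
    (hS : (endPt S).1 < (endPt S).2) : IsSchroder n (S ++ [SStep.east, SStep.north] ++ T) := by
  obtain ⟨hend, hpts, hdiag⟩ := isSchroder_iff.1 hP
  rw [points_splice_north_east, forall_mem_insert] at hpts
  rw [diagStarts_splice_north_east] at hdiag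
  rw [isSchroder_iff, endPt_splice_east_north, points_splice_east_north, forall_mem_insert]
  exact ⟨hend, ⟨by simpa using hS, hpts.2⟩, hdiag⟩

theorem endPt_mem_points_splice_diag : endPt S ∈ points (S ++ [SStep.diag] ++ T) := by
  rw [points_splice]
  exact .inl (.inl (endPt_mem_points S))

theorem endPt_add_mem_points_splice_diag :
    endPt S + (1, 1) ∈ points (S ++ [SStep.diag] ++ T) := by
  rw [points_splice]
  exact .inr ⟨0, zero_mem_points T, by simp only [add_zero, endPt_singleton]; rfl⟩

theorem not_cellBelow_splice_diag : ¬ CellBelow (S ++ [SStep.diag] ++ T) (endPt S) := by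
  rintro ⟨r, hr, h1, h2⟩
  rw [points_splice, points_singleton, endPt_singleton] at hr
  rcases hr with (hr | ⟨_, hr, rfl⟩) | ⟨t, -, rfl⟩
  · have := (Prod.le_def.1 (le_endPt_of_mem_points hr)).2
    omega
  · rcases hr with rfl | rfl <;> simp [SStep.vec] at h1 h2
  · simp [SStep.vec] at h1
    omega

theorem cellBelow_splice_east_north_iff {p : ℕ × ℕ} :
    CellBelow (S ++ [SStep.east, SStep.north] ++ T) p ↔ CellBelow (S ++ [SStep.diag] ++ T) p := by
  simp only [CellBelow, points_splice_east_north, exists_mem_insert, or_iff_right_iff_imp]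
  rintro ⟨h1, h2⟩
  exact ⟨_, endPt_add_mem_points_splice_diag, h1, by simp at h2 ⊢; omega⟩

theorem cellBelow_splice_north_east_iff {p : ℕ × ℕ} :
    CellBelow (S ++ [SStep.north, SStep.east] ++ T) p ↔
      CellBelow (S ++ [SStep.diag] ++ T) p ∨ p = endPt S := by
  simp only [CellBelow, points_splice_north_east, exists_mem_insert]
  constructor
  · rintro (⟨h1, h2⟩ | h)
    · by_cases hp : p = endPt S
      · exact .inr hp
      · left
        simp only [Prod.fst_add, Prod.snd_add] at h1 h2
        rcases lt_or_eq_of_le (Nat.lt_add_one_iff.1 h2) with h2 | h2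
        · exact ⟨_, endPt_mem_points_splice_diag, h1, h2⟩
        · refine ⟨_, endPt_add_mem_points_splice_diag, ?_, by simp; omega⟩
          have : p.1 ≠ (endPt S).1 := fun h => hp (Prod.ext h h2)
          simp; omega
    · exact .inl h
  · rintro (h | rfl)
    · exact .inr h
    · exact .inl ⟨le_refl _, by simp⟩

theorem IsSchroder.endPt_snd_lt (hP : IsSchroder n (S ++ [SStep.north, SStep.east] ++ T)) :
    (endPt S).2 < n := by
  have h := le_endPt_of_mem_points
    ((points_splice_north_east (S := S) (T := T)).symm ▸ mem_insert _ _ :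
      endPt S + (0, 1) ∈ points (S ++ [SStep.north, SStep.east] ++ T))
  rw [hP.1] at h
  exact (Prod.le_def.1 h).2

variable {e : Fin n × Fin n}

theorem pathGraph_splice_diag (he : Prod.map Fin.val Fin.val e = endPt S) :
    pathGraph n (S ++ [SStep.diag] ++ T) =
      (pathGraph n (S ++ [SStep.east, SStep.north] ++ T)).insertE1 e := by
  have hinj : Function.Injective (Prod.map (Fin.val (n := n)) (Fin.val (n := n))) :=
    Fin.val_injective.prodMap Fin.val_injective
  ext x
  · simp only [LLTGraph.insertE1, Finset.mem_insert, mem_pathGraph_E1, diagStarts_splice_diag,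
      mem_insert_iff, ← he, hinj.eq_iff]
  · rfl
  · simp only [LLTGraph.insertE1, mem_pathGraph_Ed, diagStarts_splice_diag, mem_insert_iff,
      cellBelow_splice_east_north_iff, not_or]
    refine and_congr_right fun _ => and_congr_right fun hcell => and_iff_right ?_
    rintro h
    exact not_cellBelow_splice_diag (h ▸ hcell)

theorem pathGraph_splice_north_east (hS : (endPt S).1 < (endPt S).2)
    (he : Prod.map Fin.val Fin.val e = endPt S) :
    pathGraph n (S ++ [SStep.north, SStep.east] ++ T) =
      (pathGraph n (S ++ [SStep.east, SStep.north] ++ T)).insertEd e := by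
  have hinj : Function.Injective (Prod.map (Fin.val (n := n)) (Fin.val (n := n))) :=
    Fin.val_injective.prodMap Fin.val_injective
  ext x
  · simp only [LLTGraph.insertEd, mem_pathGraph_E1, diagStarts_splice_north_east]
  · rfl
  · simp only [LLTGraph.insertEd, Finset.mem_insert, mem_pathGraph_Ed,
      cellBelow_splice_north_east_iff, cellBelow_splice_east_north_iff,
      diagStarts_splice_north_east, ← he, hinj.eq_iff]
    by_cases hx : x = e
    · subst hx
      simp only [true_or, or_true, true_and, iff_true]
      refine ⟨by simpa [← he] using hS, ?_⟩
      simpa [he] using endPt_notMem_diagStarts_splice_east_north (S := S) (T := T)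
    · simp only [hx, or_false, false_or]

theorem notMem_pathGraph_E1_splice_east_north (he : Prod.map Fin.val Fin.val e = endPt S) :
    e ∉ (pathGraph n (S ++ [SStep.east, SStep.north] ++ T)).E1 := by
  rw [mem_pathGraph_E1, he]
  exact endPt_notMem_diagStarts_splice_east_north

theorem notMem_pathGraph_Ed_splice_east_north (he : Prod.map Fin.val Fin.val e = endPt S) :
    e ∉ (pathGraph n (S ++ [SStep.east, SStep.north] ++ T)).Ed := by
  rw [mem_pathGraph_Ed, he, cellBelow_splice_east_north_iff]
  exact fun h => not_cellBelow_splice_diag h.2.1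

end Splice

end SchroderPath

open SchroderPath

/-- (Relation (A) on Schröder paths.) If `S·n·e·T` is a
Schröder path of length `n` and the endpoint of `S` lies strictly above the
main diagonal, then `S·d·T` and `S·e·n·T` are Schröder paths of length `n` and
`LLT(S·n·e·T) = (q−1)·LLT(S·d·T) + LLT(S·e·n·T)`. -/
theorem llt_schroder_relation_A (n : ℕ) (S T : List SStep)
    (hP : IsSchroder n (S ++ [SStep.north, SStep.east] ++ T))
    (hS : (endPt S).1 < (endPt S).2) :
    IsSchroder n (S ++ [SStep.diag] ++ T) ∧
    IsSchroder n (S ++ [SStep.east, SStep.north] ++ T) ∧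
    ∀ N : ℕ,
      LLT (pathGraph n (S ++ [SStep.north, SStep.east] ++ T)) N =
        (lltQ N - 1) * LLT (pathGraph n (S ++ [SStep.diag] ++ T)) N +
          LLT (pathGraph n (S ++ [SStep.east, SStep.north] ++ T)) N := by
  refine ⟨hP.splice_diag hS, hP.splice_east_north hS, fun N => ?_⟩
  have hn := hP.endPt_snd_lt
  let e : Fin n × Fin n := (⟨(endPt S).1, hS.trans hn⟩, ⟨(endPt S).2, hn⟩)
  have he : Prod.map Fin.val Fin.val e = endPt S := rfl
  rw [pathGraph_splice_north_east hS he, pathGraph_splice_diag he]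
  exact LLT_insertEd _ (notMem_pathGraph_E1_splice_east_north he)
    (notMem_pathGraph_Ed_splice_east_north he) N
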